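/- arXiv:1511.06918 — 3 statements merged into one kernel-verified Lean document; each statement's English description precedes it below -/
import Mathlib

section
/- If the empirical CDF satisfies |\widehat{F}(v) - F(v)| \le \epsilon for all v (the DKW event), then for all q \in [0,1]: q \cdot \widehat{F^{-1}}(1 - q - \epsilon) \le q \cdot F^{-1}(1-q), i.e., the empirical lower revenue curve \widehat{R}_{min}(q) is pointwise at most the true revenue curve R(q). -/
theorem empirical_quantile_sub_le {F Fhat Qhat : ℝ → ℝ} {ε v : ℝ} (hQhat : Monotone Qhat)
    (hlow : Qhat (Fhat v) ≤ v) (hdkw : |Fhat v - F v| ≤ ε) : Qhat (F v - ε) ≤ v :=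
  (hQhat (by linarith [(abs_le.mp hdkw).1])).trans hlow

theorem stmt_1_general (m : ℕ) (H ε : ℝ)
    (F Finv Fhat Qhat : ℝ → ℝ)
    (hFinv : ∀ q ∈ Set.Icc (0:ℝ) 1, F (Finv q) = q)
    (hFinv_range : ∀ q ∈ Set.Icc (0:ℝ) 1, Finv q ∈ Set.Icc (0:ℝ) H)
    (hQhat_mono : Monotone Qhat)
    (hsand : ∀ v ∈ Set.Icc (0:ℝ) H, Qhat (Fhat v) ≤ v ∧ v ≤ Qhat (Fhat v + 1 / m))
    (hdkw : ∀ v, |Fhat v - F v| ≤ ε) :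
    ∀ q ∈ Set.Icc (0:ℝ) 1, q * Qhat (1 - q - ε) ≤ q * Finv (1 - q) := by
  intro q hq
  have hq' : 1 - q ∈ Set.Icc (0:ℝ) 1 := ⟨by linarith [hq.2], by linarith [hq.1]⟩
  have hquantile := empirical_quantile_sub_le hQhat_mono
    (hsand _ (hFinv_range _ hq')).1 (hdkw (Finv (1 - q)))
  rw [hFinv _ hq'] at hquantile
  exact mul_le_mul_of_nonneg_left hquantile hq.1

/-- under the DKW event `|F̂(v) - F(v)| ≤ ε`, the empirical lower revenue
curve `R̂min(q) = q·F̂⁻¹(1-q-ε)` is pointwise at most the true revenue curve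
`R(q) = q·F⁻¹(1-q)`. -/
theorem stmt_1 (m : ℕ) (hm : 0 < m) (H ε : ℝ) (hH : 0 ≤ H) (hε : 0 ≤ ε)
    (F Finv Fhat Qhat : ℝ → ℝ)
    (hFinv : ∀ q ∈ Set.Icc (0:ℝ) 1, F (Finv q) = q)
    (hFinv_range : ∀ q ∈ Set.Icc (0:ℝ) 1, Finv q ∈ Set.Icc (0:ℝ) H)
    (hQhat_mono : Monotone Qhat)
    (hsand : ∀ v ∈ Set.Icc (0:ℝ) H, Qhat (Fhat v) ≤ v ∧ v ≤ Qhat (Fhat v + 1 / m))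
    (hdkw : ∀ v, |Fhat v - F v| ≤ ε) :
    ∀ q ∈ Set.Icc (0:ℝ) 1, q * Qhat (1 - q - ε) ≤ q * Finv (1 - q) :=
  stmt_1_general m H ε F Finv Fhat Qhat hFinv hFinv_range hQhat_mono hsand hdkw
end

section
/- If the empirical CDF satisfies |\widehat{F}(v) - F(v)| \le \epsilon for all v, then for all q \in [0,1]: q \cdot F^{-1}(1-q) \le q \cdot \widehat{F^{-1}}(1 - q + \epsilon + 1/m), i.e., the true revenue curve R(q) is pointwise at most the empirical upper revenue curve \widehat{R}_{max}(q). -/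
lemma le_quantile_add_of_abs_sub_le {F Fhat Qhat : ℝ → ℝ} {v δ ε : ℝ} (hQhat_mono : Monotone Qhat)
    (hv : v ≤ Qhat (Fhat v + δ)) (hdkw : |Fhat v - F v| ≤ ε) :
    v ≤ Qhat (F v + ε + δ) :=
  hv.trans <| hQhat_mono <| by linarith [(abs_le.mp hdkw).2]

theorem stmt_2_general (m : ℕ) (H ε : ℝ)
    (F Finv Fhat Qhat : ℝ → ℝ)
    (hFinv : ∀ q ∈ Set.Icc (0:ℝ) 1, F (Finv q) = q)
    (hFinv_range : ∀ q ∈ Set.Icc (0:ℝ) 1, Finv q ∈ Set.Icc (0:ℝ) H)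
    (hQhat_mono : Monotone Qhat)
    (hsand : ∀ v ∈ Set.Icc (0:ℝ) H, Qhat (Fhat v) ≤ v ∧ v ≤ Qhat (Fhat v + 1 / m))
    (hdkw : ∀ v, |Fhat v - F v| ≤ ε) :
    ∀ q ∈ Set.Icc (0:ℝ) 1, q * Finv (1 - q) ≤ q * Qhat (1 - q + ε + 1 / m) := by
  intro q hq
  have h1q : 1 - q ∈ Set.Icc (0:ℝ) 1 := ⟨by linarith [hq.2], by linarith [hq.1]⟩
  have hquantile := le_quantile_add_of_abs_sub_le hQhat_mono
    (hsand _ (hFinv_range _ h1q)).2 (hdkw (Finv (1 - q)))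
  rw [hFinv _ h1q] at hquantile
  exact mul_le_mul_of_nonneg_left hquantile hq.1

/-- under the DKW event `|F̂(v) - F(v)| ≤ ε`, the true revenue curve
`R(q) = q·F⁻¹(1-q)` is pointwise at most the empirical upper revenue curve
`R̂max(q) = q·F̂⁻¹(1-q+ε+1/m)`. -/
theorem stmt_2 (m : ℕ) (hm : 0 < m) (H ε : ℝ) (hH : 0 ≤ H) (hε : 0 ≤ ε)
    (F Finv Fhat Qhat : ℝ → ℝ)
    (hFinv : ∀ q ∈ Set.Icc (0:ℝ) 1, F (Finv q) = q)
    (hFinv_range : ∀ q ∈ Set.Icc (0:ℝ) 1, Finv q ∈ Set.Icc (0:ℝ) H)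
    (hQhat_mono : Monotone Qhat)
    (hsand : ∀ v ∈ Set.Icc (0:ℝ) H, Qhat (Fhat v) ≤ v ∧ v ≤ Qhat (Fhat v + 1 / m))
    (hdkw : ∀ v, |Fhat v - F v| ≤ ε) :
    ∀ q ∈ Set.Icc (0:ℝ) 1, q * Finv (1 - q) ≤ q * Qhat (1 - q + ε + 1 / m) :=
  stmt_2_general m H ε F Finv Fhat Qhat hFinv hFinv_range hQhat_mono hsand hdkw
end

section
/- Suppose \widehat{R}_{max}^\star and \widehat{R}_{min}^\star are the optimally ironed-and-reserved revenue curves of \widehat{R}_{max} and \widehat{R}_{min} respectively, where \widehat{R}_{max}(q) = q\, G(1-q+\epsilon+1/m) and \widehat{R}_{min}(q) = q\, G(1-q-\epsilon) for a common nondecreasing G : \mathbb{R} \to [0,H]. Then for all q \in [0,1]: \widehat{R}_{max}^\star(q) - \widehat{R}_{min}^\star(q) \le (2\epsilon + 1/m) H. -/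
/-- The least concave majorant of `h` on `[0,1]`. -/
noncomputable def CH (h : ℝ → ℝ) (q : ℝ) : ℝ :=
  sInf {y | ∃ g : ℝ → ℝ, ConcaveOn ℝ (Set.Icc 0 1) g ∧
    (∀ x ∈ Set.Icc (0:ℝ) 1, h x ≤ g x) ∧ y = g q}

/-- The optimally ironed-and-reserved revenue curve:
`R⋆(q) = max (CH R q) (sup_{q' ≤ q} CH R q')`. -/
noncomputable def Rstar (R : ℝ → ℝ) (q : ℝ) : ℝ :=
  max (CH R q) (sSup (CH R '' Set.Icc 0 q))

/-!
With `s = 2ε + 1/m` one has `R̂max x = R̂min (x - s) + s · G (1 - (x - s) - ε)`, hence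
`R̂max x ≤ R̂min (x - s) + s H` for `x ≥ s`, and `R̂max x ≤ s H` for `x ≤ s`. So `R̂max` lies below
`S + s H`, where `S` is the running supremum of the concave hull of `R̂min`. The running supremum
of a concave function is concave and nondecreasing, so `S + s H` also dominates `R̂max⋆`, while
`S ≤ R̂min⋆`.
-/

open Set

section RunningSup

noncomputable def runningSup (f : ℝ → ℝ) (a q : ℝ) : ℝ := sSup (f '' Icc a q)

variable {f : ℝ → ℝ} {a b : ℝ}

lemma le_runningSup (hf : BddAbove (f '' Icc a b)) {q u : ℝ} (hq : q ≤ b) (hu : u ∈ Icc a q) :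
    f u ≤ runningSup f a q :=
  le_csSup (hf.mono (image_mono (Icc_subset_Icc_right hq))) (mem_image_of_mem f hu)

lemma monotoneOn_runningSup (hf : BddAbove (f '' Icc a b)) :
    MonotoneOn (runningSup f a) (Icc a b) := fun _ hx _ hy hxy =>
  csSup_le ((nonempty_Icc.2 hx.1).image f) fun _ ⟨_, hu, hfu⟩ =>
    hfu ▸ le_runningSup hf hy.2 ⟨hu.1, hu.2.trans hxy⟩

/-- For `u ≤ x`, `v ≤ y` concavity gives `α f u + β f v ≤ f (α u + β v)` with
`α u + β v ≤ α x + β y`; then take near-suprema in `u` and `v`. -/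
lemma concaveOn_runningSup (hconc : ConcaveOn ℝ (Icc a b) f) (hf : BddAbove (f '' Icc a b)) :
    ConcaveOn ℝ (Icc a b) (runningSup f a) := by
  refine ⟨convex_Icc a b, fun x hx y hy α β hα hβ hαβ => ?_⟩
  simp only [smul_eq_mul]
  have hz : α * x + β * y ∈ Icc a b := by
    simpa only [smul_eq_mul] using convex_Icc a b hx hy hα hβ hαβ
  have key : ∀ u ∈ Icc a x, ∀ v ∈ Icc a y, α * f u + β * f v ≤ runningSup f a (α * x + β * y) := by
    intro u hu v hv
    have hu' : u ∈ Icc a b := ⟨hu.1, hu.2.trans hx.2⟩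
    have hv' : v ∈ Icc a b := ⟨hv.1, hv.2.trans hy.2⟩
    have hmem : α * u + β * v ∈ Icc a (α * x + β * y) := by
      constructor
      · have ha : a = α * a + β * a := by linear_combination (-a) * hαβ
        nlinarith [mul_le_mul_of_nonneg_left hu.1 hα, mul_le_mul_of_nonneg_left hv.1 hβ]
      · nlinarith [mul_le_mul_of_nonneg_left hu.2 hα, mul_le_mul_of_nonneg_left hv.2 hβ]
    simpa only [smul_eq_mul] using
      (hconc.2 hu' hv' hα hβ hαβ).trans (le_runningSup hf hz.2 hmem)
  have near_sup : ∀ {q}, q ∈ Icc a b → ∀ δ > 0, ∃ u ∈ Icc a q, runningSup f a q - δ < f u :=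
    fun hq δ hδ => by
      obtain ⟨_, ⟨u, hu, rfl⟩, hlt⟩ := exists_lt_of_lt_csSup
        ((nonempty_Icc.2 hq.1).image f) (sub_lt_self (runningSup f a _) hδ)
      exact ⟨u, hu, hlt⟩
  refine le_of_forall_pos_le_add fun δ hδ => ?_
  obtain ⟨u, hu, hfu⟩ := near_sup hx δ hδ
  obtain ⟨v, hv, hfv⟩ := near_sup hy δ hδ
  nlinarith [key u hu v hv]

end RunningSup

section ConcaveMajorant

variable {R : ℝ → ℝ}

lemma CH_le_of_concaveOn {g : ℝ → ℝ} (hg : ConcaveOn ℝ (Icc 0 1) g)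
    (hRg : ∀ x ∈ Icc (0:ℝ) 1, R x ≤ g x) {q : ℝ} (hq : q ∈ Icc (0:ℝ) 1) : CH R q ≤ g q :=
  csInf_le ⟨R q, fun _ ⟨_, _, hmaj, hy⟩ => hy ▸ hmaj q hq⟩ ⟨g, hg, hRg, rfl⟩

lemma nonempty_concaveMajorant_values (hR : BddAbove (R '' Icc 0 1)) (q : ℝ) :
    {y | ∃ g : ℝ → ℝ, ConcaveOn ℝ (Icc 0 1) g ∧ (∀ x ∈ Icc (0:ℝ) 1, R x ≤ g x) ∧
      y = g q}.Nonempty := by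
  obtain ⟨H, hH⟩ := hR
  exact ⟨H, fun _ => H, concaveOn_const H (convex_Icc 0 1),
    fun x hx => hH (mem_image_of_mem R hx), rfl⟩

lemma le_CH (hR : BddAbove (R '' Icc 0 1)) {q : ℝ} (hq : q ∈ Icc (0:ℝ) 1) : R q ≤ CH R q :=
  le_csInf (nonempty_concaveMajorant_values hR q) fun _ ⟨_, _, hmaj, hy⟩ => hy ▸ hmaj q hq

lemma bddAbove_CH (hR : BddAbove (R '' Icc 0 1)) : BddAbove (CH R '' Icc 0 1) := by
  obtain ⟨H, hH⟩ := hR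
  refine ⟨H, fun _ ⟨q, hq, hCH⟩ => hCH ▸ ?_⟩
  exact CH_le_of_concaveOn (concaveOn_const H (convex_Icc 0 1))
    (fun x hx => hH (mem_image_of_mem R hx)) hq

lemma concaveOn_CH (hR : BddAbove (R '' Icc 0 1)) : ConcaveOn ℝ (Icc 0 1) (CH R) := by
  refine ⟨convex_Icc 0 1, fun x hx y hy α β hα hβ hαβ => ?_⟩
  refine le_csInf (nonempty_concaveMajorant_values hR _) fun _ ⟨g, hg, hRg, hy'⟩ => hy' ▸ ?_
  calc α • CH R x + β • CH R y ≤ α • g x + β • g y := by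
        gcongr
        exacts [CH_le_of_concaveOn hg hRg hx, CH_le_of_concaveOn hg hRg hy]
    _ ≤ g (α • x + β • y) := hg.2 hx hy hα hβ hαβ

lemma Rstar_le_of_concaveOn_of_monotoneOn {g : ℝ → ℝ} (hg : ConcaveOn ℝ (Icc 0 1) g)
    (hg_mono : MonotoneOn g (Icc 0 1)) (hRg : ∀ x ∈ Icc (0:ℝ) 1, R x ≤ g x)
    {q : ℝ} (hq : q ∈ Icc (0:ℝ) 1) : Rstar R q ≤ g q :=
  max_le (CH_le_of_concaveOn hg hRg hq) <|
    csSup_le ((nonempty_Icc.2 hq.1).image _) fun _ ⟨_, hu, hCH⟩ => hCH ▸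
      (CH_le_of_concaveOn hg hRg ⟨hu.1, hu.2.trans hq.2⟩).trans
        (hg_mono ⟨hu.1, hu.2.trans hq.2⟩ hq hu.2)

lemma Rstar_sub_le_of_le_shift {R₁ R₂ : ℝ → ℝ} {s c : ℝ} (hR₂ : BddAbove (R₂ '' Icc 0 1))
    (hR₂0 : 0 ≤ R₂ 0) (hs : 0 ≤ s) (hsmall : ∀ x ∈ Icc (0:ℝ) 1, x ≤ s → R₁ x ≤ c)
    (hshift : ∀ x ∈ Icc (0:ℝ) 1, s ≤ x → R₁ x ≤ R₂ (x - s) + c) {q : ℝ} (hq : q ∈ Icc (0:ℝ) 1) :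
    Rstar R₁ q - Rstar R₂ q ≤ c := by
  have hCH := bddAbove_CH hR₂
  have le_sup : ∀ x ∈ Icc (0:ℝ) 1, ∀ y ∈ Icc 0 x, R₂ y ≤ runningSup (CH R₂) 0 x :=
    fun x hx y hy => (le_CH hR₂ ⟨hy.1, hy.2.trans hx.2⟩).trans (le_runningSup hCH hx.2 hy)
  have hmaj : ∀ x ∈ Icc (0:ℝ) 1, R₁ x ≤ runningSup (CH R₂) 0 x + c := by
    intro x hx
    rcases le_total x s with hxs | hsx
    · linarith [hsmall x hx hxs, le_sup x hx 0 ⟨le_rfl, hx.1⟩]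
    · linarith [hshift x hx hsx, le_sup x hx (x - s) ⟨by linarith, by linarith⟩]
  have hle := Rstar_le_of_concaveOn_of_monotoneOn
    ((concaveOn_runningSup (concaveOn_CH hR₂) hCH).add_const c)
    (fun x hx y hy hxy => add_le_add_left (monotoneOn_runningSup hCH hx hy hxy) c) hmaj hq
  have hge : runningSup (CH R₂) 0 q ≤ Rstar R₂ q := le_max_right _ _
  linarith [show Rstar R₁ q ≤ runningSup (CH R₂) 0 q + c from hle]

end ConcaveMajorant

theorem stmt_7_general (G : ℝ → ℝ) (H ε : ℝ) (m : ℕ)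
    (hε : 0 < ε) (hGr : ∀ x, G x ∈ Set.Icc 0 H) :
    ∀ q ∈ Set.Icc (0:ℝ) 1,
      Rstar (fun q => q * G (1 - q + ε + 1 / m)) q
        - Rstar (fun q => q * G (1 - q - ε)) q ≤ (2 * ε + 1 / m) * H := by
  intro q hq
  have hs : 0 ≤ 2 * ε + 1 / (m : ℝ) := by positivity
  have hH : 0 ≤ H := (hGr 0).1.trans (hGr 0).2
  have hbdd : ∀ x ∈ Icc (0:ℝ) 1, ∀ y, x * G y ≤ x * H :=
    fun x hx y => mul_le_mul_of_nonneg_left (hGr y).2 hx.1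
  refine Rstar_sub_le_of_le_shift ⟨H, ?_⟩ (by simp) hs (fun x hx hxs => ?_) (fun x hx _ => ?_) hq
  · rintro _ ⟨x, hx, rfl⟩
    exact (hbdd x hx _).trans (mul_le_of_le_one_left hH hx.2)
  · exact (hbdd x hx _).trans (mul_le_mul_of_nonneg_right hxs hH)
  · have harg : 1 - x + ε + 1 / (m : ℝ) = 1 - (x - (2 * ε + 1 / m)) - ε := by ring
    simp only [harg]
    nlinarith [mul_le_mul_of_nonneg_left (hGr (1 - (x - (2 * ε + 1 / m)) - ε)).2 hs]

/-- with `R̂max(q) = q·G(1-q+ε+1/m)` and `R̂min(q) = q·G(1-q-ε)` for a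
common nondecreasing `G : ℝ → [0,H]`, the optimally ironed-and-reserved curves
satisfy `R̂max⋆(q) - R̂min⋆(q) ≤ (2ε+1/m)·H` for all `q ∈ [0,1]`. -/
theorem stmt_7 (G : ℝ → ℝ) (H ε : ℝ) (m : ℕ) (hm : 1 ≤ m) (hH : 0 < H)
    (hε : 0 < ε) (hG : Monotone G) (hGr : ∀ x, G x ∈ Set.Icc 0 H) :
    ∀ q ∈ Set.Icc (0:ℝ) 1,
      Rstar (fun q => q * G (1 - q + ε + 1 / m)) q
        - Rstar (fun q => q * G (1 - q - ε)) q ≤ (2 * ε + 1 / m) * H :=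
  stmt_7_general G H ε m hε hGr
end
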